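/- Suppose P({ξ ∈ Ω : ξ is strictly increasing}) > 1 − δ for some 0 ≤ δ < α ≤ 1/2. Then for every l in Fin L, the event {ξ ∈ Ω : ξ is strictly increasing} is contained in the local statement A(l,α), hence P(A(l,α)) > 1 − δ for every l; moreover, the intersection over all l of the local statements equals the ordering event: ⋂_{l ∈ Fin L} A(l,α) = {ξ ∈ Ω : ξ is strictly increasing}. -/

import Mathlib

/-! Once the ordering event has probability above `1 - α` with `α ≤ 1/2`, an elementary
statement `E(l, l')` has probability above `1 - α` exactly when `l' < l`: it contains the ordering
event in that case, and is disjoint from it otherwise. So `underA(l, α)` and `overA(l, α)` are the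
indices below and above `l`, and `A(l, α)` says that `ξ` is ordered correctly around `l`. -/

open MeasureTheory Set

/-- Elementary statement: parameter `l` is ordered higher than `l'`. -/
def Elem (L : ℕ) (l l' : Fin L) : Set (Fin L → ℝ) := {ξ | ξ l' < ξ l}

/-- Indices ordered lower than `l` with posterior probability at least `1 - α`. -/
def underA {L : ℕ} (P : Measure (Fin L → ℝ)) (α : ℝ) (l : Fin L) : Set (Fin L) :=
  {l' | (P (Elem L l l')).toReal > 1 - α}

/-- Indices ordered higher than `l` with posterior probability at least `1 - α`. -/
def overA {L : ℕ} (P : Measure (Fin L → ℝ)) (α : ℝ) (l : Fin L) : Set (Fin L) :=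
  {l' | (P (Elem L l' l)).toReal > 1 - α}

/-- Local statement `A(l, α)`. -/
def locA {L : ℕ} (P : Measure (Fin L → ℝ)) (α : ℝ) (l : Fin L) : Set (Fin L → ℝ) :=
  (⋂ l' ∈ underA P α l, Elem L l l') ∩ (⋂ l' ∈ overA P α l, Elem L l' l)

/-- Local statement with local error `t`, `A(l, α, t)`. -/
def locAt {L : ℕ} (P : Measure (Fin L → ℝ)) (α t : ℝ) (l : Fin L) : Set (Fin L → ℝ) :=
  ⋃ (u : Set (Fin L)) (v : Set (Fin L)) (_ : u ⊆ underA P α l) (_ : v ⊆ overA P α l)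
    (_ : (1 - t) * ((underA P α l ∪ overA P α l).ncard : ℝ) ≤ (u.ncard : ℝ) + (v.ncard : ℝ)),
    (⋂ l' ∈ u, Elem L l l') ∩ (⋂ l' ∈ v, Elem L l' l)

/-- Indices whose local statements have posterior probability at least `1 - γ`. -/
def GsetI {L : ℕ} (P : Measure (Fin L → ℝ)) (α t γ : ℝ) : Set (Fin L) :=
  {l | (P (locAt P α t l)).toReal ≥ 1 - γ}

/-- Global statement `G(α, t, γ)`. -/
def globG {L : ℕ} (P : Measure (Fin L → ℝ)) (α t γ : ℝ) : Set (Fin L → ℝ) :=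
  ⋂ l ∈ GsetI P α t γ, locAt P α t l

/-- Global statement with global error `q`, `G(α, t, γ, q)`. -/
def globGq {L : ℕ} (P : Measure (Fin L → ℝ)) (α t γ q : ℝ) : Set (Fin L → ℝ) :=
  ⋃ (G : Set (Fin L)) (_ : G ⊆ GsetI P α t γ)
    (_ : (1 - q) * ((GsetI P α t γ).ncard : ℝ) ≤ (G.ncard : ℝ)),
    ⋂ l ∈ G, locAt P α t l

lemma measurableSet_Elem (L : ℕ) (l l' : Fin L) : MeasurableSet (Elem L l l') :=
  measurableSet_lt (measurable_pi_apply l') (measurable_pi_apply l)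

lemma setOf_strictMono_subset_Elem {L : ℕ} {l l' : Fin L} (h : l' < l) :
    {ξ : Fin L → ℝ | StrictMono ξ} ⊆ Elem L l l' :=
  fun _ hξ => hξ h

lemma disjoint_setOf_strictMono_Elem {L : ℕ} {l l' : Fin L} (h : l ≤ l') :
    Disjoint {ξ : Fin L → ℝ | StrictMono ξ} (Elem L l l') :=
  Set.disjoint_left.2 fun _ hξ hlt => (hξ.monotone h).not_gt hlt

section OrderingEvent

variable {L : ℕ} {P : Measure (Fin L → ℝ)} [IsProbabilityMeasure P] {α : ℝ}

lemma underA_eq_Iio (hα : α ≤ 1 / 2)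
    (hS : 1 - α < (P {ξ : Fin L → ℝ | StrictMono ξ}).toReal) (l : Fin L) :
    underA P α l = Iio l := by
  ext l'
  refine ⟨fun hmem => ?_, fun hlt => ?_⟩
  · rw [mem_Iio]
    by_contra! hle
    have hsum := measureReal_union (μ := P) (disjoint_setOf_strictMono_Elem hle)
      (measurableSet_Elem L l l')
    have hle_one : P.real ({ξ : Fin L → ℝ | StrictMono ξ} ∪ Elem L l l') ≤ 1 :=
      measureReal_le_one
    have hmem' : P.real (Elem L l l') > 1 - α := hmem
    have hS' : P.real {ξ : Fin L → ℝ | StrictMono ξ} > 1 - α := hS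
    linarith
  · show (P (Elem L l l')).toReal > 1 - α
    exact hS.trans_le (measureReal_mono (setOf_strictMono_subset_Elem hlt))

lemma overA_eq_Ioi (hα : α ≤ 1 / 2)
    (hS : 1 - α < (P {ξ : Fin L → ℝ | StrictMono ξ}).toReal) (l : Fin L) :
    overA P α l = Ioi l := by
  ext l'
  exact (Set.ext_iff.1 (underA_eq_Iio hα hS l') l)

lemma locA_eq (hα : α ≤ 1 / 2)
    (hS : 1 - α < (P {ξ : Fin L → ℝ | StrictMono ξ}).toReal) (l : Fin L) :
    locA P α l = {ξ | (∀ l' < l, ξ l' < ξ l) ∧ ∀ l', l < l' → ξ l < ξ l'} := by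
  ext ξ
  simp [locA, underA_eq_Iio hα hS, overA_eq_Ioi hα hS, _root_.Elem]

end OrderingEvent

theorem stmt_15_general (L : ℕ) (P : Measure (Fin L → ℝ)) [IsProbabilityMeasure P]
    (δ α : ℝ) (hδα : δ < α) (hα : α ≤ 1 / 2)
    (hconc : (P {ξ : Fin L → ℝ | StrictMono ξ}).toReal > 1 - δ) :
    (∀ l : Fin L, {ξ : Fin L → ℝ | StrictMono ξ} ⊆ locA P α l) ∧
    (∀ l : Fin L, (P (locA P α l)).toReal > 1 - δ) ∧
    (⋂ l : Fin L, locA P α l) = {ξ : Fin L → ℝ | StrictMono ξ} := by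
  have hSα : 1 - α < (P {ξ : Fin L → ℝ | StrictMono ξ}).toReal := by linarith
  have hsub (l : Fin L) : {ξ : Fin L → ℝ | StrictMono ξ} ⊆ locA P α l := by
    rw [locA_eq hα hSα]
    exact fun ξ hξ => ⟨fun _ h => hξ h, fun _ h => hξ h⟩
  refine ⟨hsub, fun l => hconc.trans_le (measureReal_mono (hsub l)), ?_⟩
  refine Subset.antisymm ?_ (subset_iInter hsub)
  intro ξ hξ a b hab
  have hξb := mem_iInter.1 hξ b
  rw [locA_eq hα hSα] at hξb
  exact hξb.1 a hab

theorem stmt_15 (L : ℕ) (hL : 1 ≤ L) (P : Measure (Fin L → ℝ)) [IsProbabilityMeasure P]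
    (δ α : ℝ) (hδ0 : 0 ≤ δ) (hδα : δ < α) (hα : α ≤ 1 / 2)
    (hconc : (P {ξ : Fin L → ℝ | StrictMono ξ}).toReal > 1 - δ) :
    (∀ l : Fin L, {ξ : Fin L → ℝ | StrictMono ξ} ⊆ locA P α l) ∧
    (∀ l : Fin L, (P (locA P α l)).toReal > 1 - δ) ∧
    (⋂ l : Fin L, locA P α l) = {ξ : Fin L → ℝ | StrictMono ξ} :=
  stmt_15_general L P δ α hδα hα hconc
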